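/- Let E be a Banach space and f : D → E a function on the dyadic points of [0,1]^d. For i ∈ ℕ set K_i := max_{(x,y)∈Δ_i} ‖f(x) − f(y)‖. Then for every m ∈ ℕ and all x, y ∈ D with |x − y| ≤ 2^{−m}, the chaining inequality ‖f(x) − f(y)‖ ≤ 2d · Σ_{i=m}^∞ K_i holds (the sum being taken in [0,∞]). -/

import Mathlib

open ENNReal

/-- The dyadic points of level `m` in `[0,1]^d`: each coordinate is `i·2^{-m}` for some
integer `0 ≤ i ≤ 2^m`. -/
def dyadicLevel (d m : ℕ) : Set (EuclideanSpace ℝ (Fin d)) :=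
  {x | ∀ j, ∃ i : ℕ, i ≤ 2 ^ m ∧ x j = (i : ℝ) * (2 : ℝ) ^ (-(m : ℤ))}

/-- The dyadic points of `[0,1]^d`. -/
def dyadicPts (d : ℕ) : Set (EuclideanSpace ℝ (Fin d)) := ⋃ m, dyadicLevel d m

/-- `Δ_m`: pairs of dyadic points of level `m` at euclidean distance exactly `2^{-m}`. -/
def dyadicPairs (d m : ℕ) :
    Set (EuclideanSpace ℝ (Fin d) × EuclideanSpace ℝ (Fin d)) :=
  {p | p.1 ∈ dyadicLevel d m ∧ p.2 ∈ dyadicLevel d m ∧ ‖p.1 - p.2‖ = (2 : ℝ) ^ (-(m : ℤ))}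


/-!
Round `x` and `y` down to the dyadic grid of every level `n ≥ m`. Consecutive roundings of the
same point, and the level-`m` roundings of `x` and `y`, are grid points whose coordinates differ
by at most one grid step; such points are joined by a path of at most `d` edges of `Δ_n`,
changing one coordinate at a time. Telescoping along the two chains of roundings from level `m`
up to a level containing `x` and `y` costs `d · Σ_{i>m} K_i` on each side, and the bridge at
level `m` costs `d · K_m`.
-/

open Finset

lemma Int.abs_cast_le_one_of_abs_cast_lt_two {k : ℤ} (h : |(k : ℝ)| < 2) : |(k : ℝ)| ≤ 1 := by
  have h' : |k| < 2 := by exact_mod_cast h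
  exact_mod_cast (show |k| ≤ 1 by omega)

lemma abs_floor_sub_floor_le_one {s t : ℝ} (h : |s - t| ≤ 1) : |(⌊s⌋ : ℝ) - ⌊t⌋| ≤ 1 := by
  have hk := Int.abs_cast_le_one_of_abs_cast_lt_two (k := ⌊s⌋ - ⌊t⌋)
  push_cast at hk
  refine hk (abs_lt.2 ⟨?_, ?_⟩) <;>
    linarith [(abs_le.1 h).1, (abs_le.1 h).2, Int.floor_le s, Int.lt_floor_add_one s,
      Int.floor_le t, Int.lt_floor_add_one t]

lemma abs_floor_two_mul_sub_two_mul_floor_le_one (s : ℝ) : |(⌊2 * s⌋ : ℝ) - 2 * ⌊s⌋| ≤ 1 := by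
  have hk := Int.abs_cast_le_one_of_abs_cast_lt_two (k := ⌊2 * s⌋ - 2 * ⌊s⌋)
  push_cast at hk
  refine hk (abs_lt.2 ⟨?_, ?_⟩) <;>
    linarith [Int.floor_le (2 * s), Int.lt_floor_add_one (2 * s), Int.floor_le s,
      Int.lt_floor_add_one s]

lemma two_zpow_neg_natCast (n : ℕ) : (2 : ℝ) ^ (-(n : ℤ)) = ((2 : ℝ) ^ n)⁻¹ := by
  rw [zpow_neg, zpow_natCast]

lemma abs_sub_mul_two_zpow_le {a b : ℝ} (h : |a - b| ≤ 1) (n : ℤ) :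
    |a * 2 ^ n - b * 2 ^ n| ≤ (2 : ℝ) ^ n := by
  have hpos : (0 : ℝ) < 2 ^ n := zpow_pos two_pos n
  rw [← sub_mul, abs_mul, abs_of_pos hpos]
  exact mul_le_of_le_one_left hpos.le h

variable {d : ℕ}

lemma dyadicLevel_mono : Monotone (dyadicLevel d) := by
  refine monotone_nat_of_le_succ fun n x hx j ↦ ?_
  obtain ⟨i, hi, hxi⟩ := hx j
  refine ⟨2 * i, by rw [pow_succ]; omega, ?_⟩
  rw [hxi, two_zpow_neg_natCast, two_zpow_neg_natCast]
  push_cast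
  field_simp
  ring

lemma mem_Icc_of_mem_dyadicLevel {n : ℕ} {x : EuclideanSpace ℝ (Fin d)}
    (hx : x ∈ dyadicLevel d n) (j : Fin d) : x j ∈ Set.Icc 0 1 := by
  obtain ⟨i, hi, hxi⟩ := hx j
  rw [hxi, two_zpow_neg_natCast, ← div_eq_mul_inv]
  refine ⟨by positivity, div_le_one_of_le₀ (by exact_mod_cast hi : (i : ℝ) ≤ 2 ^ n) (by positivity)⟩

lemma eq_or_abs_sub_eq_of_mem_dyadicLevel {n : ℕ} {a b : EuclideanSpace ℝ (Fin d)}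
    (ha : a ∈ dyadicLevel d n) (hb : b ∈ dyadicLevel d n) {j : Fin d}
    (h : |a j - b j| ≤ (2 : ℝ) ^ (-(n : ℤ))) :
    a j = b j ∨ |a j - b j| = (2 : ℝ) ^ (-(n : ℤ)) := by
  obtain ⟨i, -, hai⟩ := ha j
  obtain ⟨i', -, hbi⟩ := hb j
  obtain ⟨k, hdiff⟩ : ∃ k : ℤ, a j - b j = k * 2 ^ (-(n : ℤ)) :=
    ⟨i - i', by rw [hai, hbi]; push_cast; ring⟩
  have hpos : (0 : ℝ) < 2 ^ (-(n : ℤ)) := zpow_pos two_pos _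
  rw [hdiff, abs_mul, abs_of_pos hpos, mul_le_iff_le_one_left hpos] at h
  have hk : |k| ≤ 1 := by rw [← Int.cast_abs] at h; exact_mod_cast h
  rcases Int.abs_le_one_iff.mp hk with rfl | rfl | rfl
  · left
    rwa [Int.cast_zero, zero_mul, sub_eq_zero] at hdiff
  all_goals
    right
    simp [hdiff]

lemma norm_sub_eq_abs_of_forall_ne {a b : EuclideanSpace ℝ (Fin d)} {j₀ : Fin d}
    (h : ∀ j ≠ j₀, a j = b j) : ‖a - b‖ = |a j₀ - b j₀| := by
  have hab : a - b = EuclideanSpace.single j₀ (a j₀ - b j₀) := by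
    ext j
    by_cases hj : j = j₀
    · subst hj; simp
    · simp [hj, h j hj]
  rw [hab, PiLp.norm_single, Real.norm_eq_abs]

noncomputable def dyadicFloor (n : ℕ) (x : EuclideanSpace ℝ (Fin d)) :
    EuclideanSpace ℝ (Fin d) :=
  WithLp.toLp 2 fun j ↦ (⌊(2 : ℝ) ^ n * x j⌋ : ℝ) * (2 : ℝ) ^ (-(n : ℤ))

lemma dyadicFloor_apply (n : ℕ) (x : EuclideanSpace ℝ (Fin d)) (j : Fin d) :
    dyadicFloor n x j = (⌊(2 : ℝ) ^ n * x j⌋ : ℝ) * (2 : ℝ) ^ (-(n : ℤ)) :=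
  rfl

lemma dyadicFloor_mem_dyadicLevel (n : ℕ) {x : EuclideanSpace ℝ (Fin d)}
    (hx : ∀ j, x j ∈ Set.Icc 0 1) : dyadicFloor n x ∈ dyadicLevel d n := by
  intro j
  have h0 : 0 ≤ (2 : ℝ) ^ n * x j := mul_nonneg (by positivity) (hx j).1
  refine ⟨⌊(2 : ℝ) ^ n * x j⌋₊, Nat.floor_le_of_le ?_, ?_⟩
  · push_cast
    exact mul_le_of_le_one_right (by positivity) (hx j).2
  · rw [dyadicFloor_apply, natCast_floor_eq_intCast_floor h0]

lemma dyadicFloor_eq_self {n : ℕ} {x : EuclideanSpace ℝ (Fin d)} (hx : x ∈ dyadicLevel d n) :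
    dyadicFloor n x = x := by
  ext j
  obtain ⟨i, -, hxi⟩ := hx j
  have hi : (2 : ℝ) ^ n * x j = i := by
    rw [hxi, two_zpow_neg_natCast]
    field_simp
  rw [dyadicFloor_apply, hi, Int.floor_natCast, Int.cast_natCast, hxi]

lemma abs_dyadicFloor_succ_sub_le (n : ℕ) (x : EuclideanSpace ℝ (Fin d)) (j : Fin d) :
    |dyadicFloor (n + 1) x j - dyadicFloor n x j| ≤ (2 : ℝ) ^ (-((n + 1 : ℕ) : ℤ)) := by
  have h1 : (2 : ℝ) ^ (n + 1) * x j = 2 * (2 ^ n * x j) := by ring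
  have h2 : (⌊(2 : ℝ) ^ n * x j⌋ : ℝ) * 2 ^ (-(n : ℤ)) =
      2 * ⌊(2 : ℝ) ^ n * x j⌋ * 2 ^ (-((n + 1 : ℕ) : ℤ)) := by
    rw [two_zpow_neg_natCast, two_zpow_neg_natCast, pow_succ]
    field_simp
  rw [dyadicFloor_apply, dyadicFloor_apply, h1, h2]
  exact abs_sub_mul_two_zpow_le (abs_floor_two_mul_sub_two_mul_floor_le_one _) _

lemma abs_dyadicFloor_sub_le {n : ℕ} {x y : EuclideanSpace ℝ (Fin d)} {j : Fin d}
    (h : |x j - y j| ≤ (2 : ℝ) ^ (-(n : ℤ))) :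
    |dyadicFloor n x j - dyadicFloor n y j| ≤ (2 : ℝ) ^ (-(n : ℤ)) := by
  refine abs_sub_mul_two_zpow_le (abs_floor_sub_floor_le_one ?_) _
  rw [← mul_sub, abs_mul, abs_of_pos (by positivity : (0 : ℝ) < 2 ^ n)]
  calc (2 : ℝ) ^ n * |x j - y j| ≤ 2 ^ n * 2 ^ (-(n : ℤ)) := by gcongr
    _ = 1 := by rw [two_zpow_neg_natCast, mul_inv_cancel₀ (by positivity)]

section Chaining

variable {X : Type*} [PseudoEMetricSpace X] {f : EuclideanSpace ℝ (Fin d) → X} {n : ℕ}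
  {C : ℝ≥0∞} {K : ℕ → ℝ≥0∞}

lemma edist_le_of_mem_dyadicLevel_of_forall_ne
    (hC : ∀ p ∈ dyadicPairs d n, edist (f p.1) (f p.2) ≤ C)
    {a b : EuclideanSpace ℝ (Fin d)} (ha : a ∈ dyadicLevel d n) (hb : b ∈ dyadicLevel d n)
    {j₀ : Fin d} (heq : ∀ j ≠ j₀, a j = b j) (hle : |a j₀ - b j₀| ≤ (2 : ℝ) ^ (-(n : ℤ))) :
    edist (f a) (f b) ≤ C := by
  rcases eq_or_abs_sub_eq_of_mem_dyadicLevel ha hb hle with h0 | h1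
  · have : a = b := by
      ext j
      by_cases hj : j = j₀
      · rwa [hj]
      · exact heq j hj
    simp [this]
  · exact hC (a, b) ⟨ha, hb, (norm_sub_eq_abs_of_forall_ne heq).trans h1⟩

def coordPath (a b : EuclideanSpace ℝ (Fin d)) (k : ℕ) : EuclideanSpace ℝ (Fin d) :=
  WithLp.toLp 2 fun j ↦ if (j : ℕ) < k then b j else a j

lemma edist_le_mul_of_mem_dyadicLevel
    (hC : ∀ p ∈ dyadicPairs d n, edist (f p.1) (f p.2) ≤ C)
    {a b : EuclideanSpace ℝ (Fin d)} (ha : a ∈ dyadicLevel d n) (hb : b ∈ dyadicLevel d n)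
    (h : ∀ j, |a j - b j| ≤ (2 : ℝ) ^ (-(n : ℤ))) :
    edist (f a) (f b) ≤ d * C := by
  have hmem : ∀ k, coordPath a b k ∈ dyadicLevel d n := fun k j ↦ by
    simp only [coordPath, PiLp.toLp_apply]
    split_ifs
    exacts [hb j, ha j]
  have hstep : ∀ {k}, k < d → edist (f (coordPath a b k)) (f (coordPath a b (k + 1))) ≤ C :=
    fun {k} hk ↦ edist_le_of_mem_dyadicLevel_of_forall_ne hC (hmem k) (hmem (k + 1))
      (j₀ := ⟨k, hk⟩) (fun j hj ↦ by
        have : (j : ℕ) ≠ k := fun h' ↦ hj (Fin.ext h')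
        simp only [coordPath, PiLp.toLp_apply]
        split_ifs <;> first | rfl | omega)
      (by simpa [coordPath, abs_sub_comm] using h ⟨k, hk⟩)
  have hpath := edist_le_range_sum_of_edist_le (f := f ∘ coordPath a b) d hstep
  have h0 : coordPath a b 0 = a := by ext j; simp [coordPath]
  have hd : coordPath a b d = b := by ext j; simp [coordPath]
  simpa [h0, hd] using hpath

lemma edist_dyadicFloor_le_tsum
    (hK : ∀ n, ∀ p ∈ dyadicPairs d n, edist (f p.1) (f p.2) ≤ K n)
    {m N : ℕ} (hmN : m ≤ N) {x : EuclideanSpace ℝ (Fin d)} (hx : x ∈ dyadicLevel d N) :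
    edist (f (dyadicFloor m x)) (f x) ≤ d * ∑' i, K (m + i + 1) := by
  have hcoord := mem_Icc_of_mem_dyadicLevel hx
  have hchain : edist (f (dyadicFloor m x)) (f (dyadicFloor N x)) ≤
      ∑ k ∈ Ico m N, d * K (k + 1) :=
    edist_le_Ico_sum_of_edist_le (f := fun k ↦ f (dyadicFloor k x)) hmN fun {k} _ _ ↦
      edist_le_mul_of_mem_dyadicLevel (hK (k + 1))
        (dyadicLevel_mono k.le_succ (dyadicFloor_mem_dyadicLevel k hcoord))
        (dyadicFloor_mem_dyadicLevel (k + 1) hcoord)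
        fun j ↦ by rw [abs_sub_comm]; exact abs_dyadicFloor_succ_sub_le k x j
  calc edist (f (dyadicFloor m x)) (f x)
      ≤ ∑ k ∈ Ico m N, d * K (k + 1) := by rwa [dyadicFloor_eq_self hx] at hchain
    _ = d * ∑ i ∈ range (N - m), K (m + i + 1) := by rw [sum_Ico_eq_sum_range, mul_sum]
    _ ≤ d * ∑' i, K (m + i + 1) := by gcongr; exact ENNReal.sum_le_tsum _

lemma edist_le_two_mul_tsum
    (hK : ∀ n, ∀ p ∈ dyadicPairs d n, edist (f p.1) (f p.2) ≤ K n)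
    {m N : ℕ} (hmN : m ≤ N) {x y : EuclideanSpace ℝ (Fin d)}
    (hx : x ∈ dyadicLevel d N) (hy : y ∈ dyadicLevel d N)
    (hxy : ‖x - y‖ ≤ (2 : ℝ) ^ (-(m : ℤ))) :
    edist (f x) (f y) ≤ 2 * d * ∑' i, K (m + i) := by
  have hbridge : edist (f (dyadicFloor m x)) (f (dyadicFloor m y)) ≤ d * K m :=
    edist_le_mul_of_mem_dyadicLevel (hK m)
      (dyadicFloor_mem_dyadicLevel m (mem_Icc_of_mem_dyadicLevel hx))
      (dyadicFloor_mem_dyadicLevel m (mem_Icc_of_mem_dyadicLevel hy))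
      fun j ↦ abs_dyadicFloor_sub_le <| by simpa using (PiLp.norm_apply_le (x - y) j).trans hxy
  set T := ∑' i, K (m + i + 1)
  have hsplit : ∑' i, K (m + i) = K m + T := tsum_eq_zero_add' ENNReal.summable
  calc edist (f x) (f y)
      ≤ edist (f x) (f (dyadicFloor m x)) + edist (f (dyadicFloor m x)) (f (dyadicFloor m y)) +
        edist (f (dyadicFloor m y)) (f y) := edist_triangle4 ..
    _ ≤ d * T + d * K m + d * T := by
        gcongr
        · rw [edist_comm]
          exact edist_dyadicFloor_le_tsum hK hmN hx
        · exact edist_dyadicFloor_le_tsum hK hmN hy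
    _ = d * (K m + T) + d * T := by ring
    _ ≤ d * (K m + T) + d * (K m + T) := by gcongr; exact le_add_self
    _ = 2 * d * ∑' i, K (m + i) := by rw [hsplit]; ring

end Chaining

/-- Chaining inequality: for a function `f` on the dyadic points of `[0,1]^d` with
`K_i = max_{(x,y) ∈ Δ_i} ‖f(x) - f(y)‖`, any two dyadic points `x, y` with
`|x - y| ≤ 2^{-m}` satisfy `‖f(x) - f(y)‖ ≤ 2d · Σ_{i=m}^∞ K_i` (the sum in `[0,∞]`). -/
theorem stmt2 {E : Type*} [NormedAddCommGroup E] {d : ℕ}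
    (f : EuclideanSpace ℝ (Fin d) → E)
    (K : ℕ → ℝ≥0∞)
    (hK : ∀ i, K i = ⨆ p ∈ dyadicPairs d i, (‖f p.1 - f p.2‖₊ : ℝ≥0∞))
    (m : ℕ) {x y : EuclideanSpace ℝ (Fin d)}
    (hx : x ∈ dyadicPts d) (hy : y ∈ dyadicPts d)
    (hxy : ‖x - y‖ ≤ (2 : ℝ) ^ (-(m : ℤ))) :
    (‖f x - f y‖₊ : ℝ≥0∞) ≤ 2 * (d : ℝ≥0∞) * ∑' i : ℕ, K (m + i) := by
  have hedist (a b : EuclideanSpace ℝ (Fin d)) : edist (f a) (f b) = ‖f a - f b‖₊ := by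
    rw [edist_eq_enorm_sub, enorm_eq_nnnorm]
  have hK' : ∀ n, ∀ p ∈ dyadicPairs d n, edist (f p.1) (f p.2) ≤ K n := fun n p hp ↦ by
    rw [hK n, hedist]
    exact le_iSup₂ (f := fun p _ ↦ (‖f p.1 - f p.2‖₊ : ℝ≥0∞)) p hp
  obtain ⟨N₁, hx⟩ := Set.mem_iUnion.1 hx
  obtain ⟨N₂, hy⟩ := Set.mem_iUnion.1 hy
  rw [← hedist]
  exact edist_le_two_mul_tsum hK' (le_max_left m (max N₁ N₂))
    (dyadicLevel_mono (by omega) hx) (dyadicLevel_mono (by omega) hy) hxy
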